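/- Let M be a Hadamard manifold, Ω ⊆ M a nonempty closed convex set, F : Ω × Ω → ℝ a monotone bifunction with F(x,x) = 0 for all x ∈ Ω, λ > 0 and x ∈ M. If z_1, z_2 ∈ Ω both satisfy λ F(z_i, y) + d(z_i, x) b_{γ_{z_i,x}}(y) ≥ 0 for all y ∈ Ω (the regularization term being 0 when z_i = x), then z_1 = z_2; i.e., the resolvent J_λ^F(x) := {z ∈ Ω : λ F(z,y) + d(z,x) b_{γ_{z,x}}(y) ≥ 0 for all y ∈ Ω} contains at most one point. -/

import Mathlib

open Set Filter

universe u v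

/-- An axiomatic model of an `n`-dimensional Hadamard manifold: a complete (proper) metric
space `M` (with `dist` the Riemannian distance) in which every pair of points `x, y` is joined
by a unique minimizing geodesic `geo x y : ℝ → M` (`geo x y t = exp_x (t • exp_x⁻¹ y)`),
satisfying the nonpositive-curvature comparison inequalities, in which every pair of distinct
points `z, x` determines a unique unit-speed geodesic ray `ray z x` starting at `z` and passing
through `x`, and in which, for each point `x`, the exponential map
`exp x : T_xM ≃ ℝⁿ → M` is a homeomorphism with inverse `log x` satisfying
`dist x y = ‖log x y‖`, jointly continuous in the footpoint (the tangent bundle `TM` with its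
Sasaki metric being globally trivialized as `M × ℝⁿ`). Euclidean space `ℝⁿ` is a model, so the
axioms are consistent. -/
class Hadamard (n : ℕ) (M : Type u) extends MetricSpace M where
  geo : M → M → ℝ → M
  geo_zero : ∀ x y : M, geo x y 0 = x
  geo_one : ∀ x y : M, geo x y 1 = y
  geo_dist : ∀ x y : M, ∀ s ∈ Set.Icc (0:ℝ) 1, ∀ t ∈ Set.Icc (0:ℝ) 1,
    dist (geo x y s) (geo x y t) = |s - t| * dist x y
  geo_unique : ∀ x y z : M, ∀ t ∈ Set.Icc (0:ℝ) 1,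
    dist x z = t * dist x y → dist z y = (1 - t) * dist x y → z = geo x y t
  dist_convex : ∀ x y x' y' : M, ∀ t ∈ Set.Icc (0:ℝ) 1,
    dist (geo x y t) (geo x' y' t) ≤ (1 - t) * dist x x' + t * dist y y'
  cn_ineq : ∀ x y p : M, ∀ t ∈ Set.Icc (0:ℝ) 1,
    dist (geo x y t) p ^ 2 ≤
      (1 - t) * dist x p ^ 2 + t * dist y p ^ 2 - t * (1 - t) * dist x y ^ 2
  ray : M → M → ℝ → M
  ray_zero : ∀ z x : M, z ≠ x → ray z x 0 = z
  ray_through : ∀ z x : M, z ≠ x → ray z x (dist z x) = x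
  ray_isom : ∀ z x : M, z ≠ x → ∀ s ∈ Set.Ici (0:ℝ), ∀ t ∈ Set.Ici (0:ℝ),
    dist (ray z x s) (ray z x t) = |s - t|
  exp : M → EuclideanSpace ℝ (Fin n) → M
  log : M → M → EuclideanSpace ℝ (Fin n)
  exp_log : ∀ x y : M, exp x (log x y) = y
  log_exp : ∀ (x : M) (v : EuclideanSpace ℝ (Fin n)), log x (exp x v) = v
  dist_log : ∀ x y : M, dist x y = ‖log x y‖
  exp_continuous : Continuous fun p : M × EuclideanSpace ℝ (Fin n) => exp p.1 p.2
  geo_exp : ∀ (x y : M) (t : ℝ), geo x y t = exp x (t • log x y)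
  properSpace : ProperSpace M

/-- A set `D` in a Hadamard manifold is convex if for any `x, y ∈ D` the geodesic segment
`γ_{x,y}([0,1])` is contained in `D`. -/
def GConvex (n : ℕ) {M : Type u} [Hadamard n M] (D : Set M) : Prop :=
  ∀ x ∈ D, ∀ y ∈ D, ∀ t ∈ Set.Icc (0:ℝ) 1, Hadamard.geo n x y t ∈ D

/-- A function `f` is convex on a convex set `D` if
`f (γ_{x,y}(t)) ≤ (1 - t) * f x + t * f y` for all `x, y ∈ D`, `t ∈ [0,1]`. -/
def GConvexOn (n : ℕ) {M : Type u} [Hadamard n M] (D : Set M) (f : M → ℝ) : Prop :=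
  ∀ x ∈ D, ∀ y ∈ D, ∀ t ∈ Set.Icc (0:ℝ) 1,
    f (Hadamard.geo n x y t) ≤ (1 - t) * f x + t * f y

/-- The convex hull of `B`: the smallest convex subset of `M` containing `B`. -/
def ghull (n : ℕ) {M : Type u} [Hadamard n M] (B : Set M) : Set M :=
  ⋂₀ {C : Set M | GConvex n C ∧ B ⊆ C}

/-- The Busemann function of the geodesic ray starting at `z` and passing through `x`,
evaluated at `y`:  `b_{γ_{z,x}}(y) = lim_{t → ∞} (d (y, γ_{z,x}(t)) - t)`
(junk value if the limit does not exist, e.g. if `z = x`). -/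
noncomputable def busemann (n : ℕ) {M : Type u} [Hadamard n M] (z x y : M) : ℝ :=
  limUnder atTop fun t : ℝ => dist y (Hadamard.ray n z x t) - t

/-!
Adding the two variational inequalities at `y = z₂` and `y = z₁`, monotonicity of `F` leaves
`d(z₁,x) b₁(z₂) + d(z₂,x) b₂(z₁) ≥ 0`, where `b_i` is the Busemann function of `γ_{z_i,x}`.
Since `b_{γ_{z,x}}(y) ≤ d(y,x) - d(z,x)`, this forces `d(z₁,x) = d(z₂,x) =: d` and `b₁(z₂) = 0`.
Let `γ = γ_{z₁,x}`. By the CN inequality, the point at distance `d` from `z₂` on `[z₂, γ(T)]`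
tends to `x` as `T → ∞`, so (by continuity of `exp` and `log`) the point at distance `2d` tends
to the reflection `w` of `z₂` in `x`; comparing with `d(z₁, γ(T)) = T` gives `d(z₁, w) = 2d`.
Thus `x` is the midpoint of both `[w, z₁]` and `[w, z₂]`, and since geodesics issuing from `w`
do not branch (`log_w` is injective), `z₁ = z₂`.
-/

open Topology

namespace Hadamard

variable {n : ℕ} {M : Type u} [Hadamard n M]

theorem dist_exp (z : M) (v : EuclideanSpace ℝ (Fin n)) : dist z (exp z v) = ‖v‖ := by
  rw [dist_log, log_exp]

theorem continuous_exp (z : M) : Continuous (exp (n := n) z) :=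
  exp_continuous.comp (Continuous.prodMk_right z)

theorem isProperMap_exp (z : M) : IsProperMap (exp (n := n) z) := by
  refine isProperMap_iff_isCompact_preimage.2 ⟨continuous_exp z, fun K hK => ?_⟩
  obtain ⟨R, hR⟩ := hK.isBounded.subset_closedBall z
  refine (isCompact_closedBall (0 : EuclideanSpace ℝ (Fin n)) R).of_isClosed_subset
    (hK.isClosed.preimage (continuous_exp z)) fun v hv => ?_
  simpa [dist_comm, dist_exp] using hR hv

theorem continuous_log (z : M) : Continuous (log (n := n) z) :=
  ((Equiv.mk (exp z) (log z) (log_exp z) (exp_log z)).toHomeomorphOfContinuousClosed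
    (continuous_exp z) (isProperMap_exp z).isClosedMap).symm.continuous

theorem log_geo (x y : M) (t : ℝ) : log (n := n) x (geo n x y t) = t • log x y := by
  rw [geo_exp, log_exp]

theorem exp_smul_log_geo (z y : M) (c t : ℝ) :
    exp z (c • log (n := n) z (geo n z y t)) = geo n z y (c * t) := by
  rw [log_geo, smul_smul, geo_exp]

theorem tendsto_geo_mul {ι : Type*} {l : Filter ι} {z x : M} {q : ι → M} {s : ι → ℝ}
    (h : Tendsto (fun i => geo n z (q i) (s i)) l (𝓝 x)) (c : ℝ) :
    Tendsto (fun i => geo n z (q i) (c * s i)) l (𝓝 (exp z (c • log (n := n) z x))) := by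
  simp only [← exp_smul_log_geo]
  exact ((continuous_exp z).tendsto _).comp (((continuous_log z).tendsto x).comp h |>.const_smul c)

theorem geo_injective_of_ne_zero (w : M) {t : ℝ} (ht : t ≠ 0) :
    Function.Injective fun y => geo n w y t := by
  intro a b hab
  have hlog : log (n := n) w a = log w b := by
    apply smul_right_injective _ ht
    simpa only [log_geo] using congrArg (log (n := n) w) hab
  rw [← exp_log (n := n) w a, hlog, exp_log]

theorem dist_geo_right (x y : M) {t : ℝ} (ht : t ∈ Icc (0 : ℝ) 1) :
    dist (geo n x y t) y = (1 - t) * dist x y := by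
  have h := geo_dist (n := n) x y t ht 1 (by simp)
  rwa [geo_one, abs_of_nonpos (by linarith [ht.2]), neg_sub] at h

def reflect (n : ℕ) {M : Type u} [Hadamard n M] (z x : M) : M :=
  exp z ((2 : ℝ) • log (n := n) z x)

theorem geo_reflect_half (z x : M) : geo n z (reflect n z x) (1 / 2) = x := by
  rw [reflect, geo_exp, log_exp, smul_smul]
  norm_num [exp_log]

theorem dist_reflect (z x : M) : dist z (reflect n z x) = 2 * dist z x := by
  rw [reflect, dist_exp, norm_smul, dist_log]
  norm_num

theorem dist_reflect_right (z x : M) : dist x (reflect n z x) = dist z x := by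
  have h := dist_geo_right (n := n) z (reflect n z x) (t := 1 / 2) (by norm_num)
  rw [geo_reflect_half, dist_reflect] at h
  linarith

theorem eq_of_dist_reflect_eq {z₁ z₂ x : M} (hd : dist z₁ x = dist z₂ x)
    (hw : dist z₁ (reflect n z₂ x) = 2 * dist z₂ x) : z₁ = z₂ := by
  set w := reflect n z₂ x
  have hwx : dist w x = dist z₂ x := by rw [dist_comm, dist_reflect_right]
  have hmid₁ : x = geo n w z₁ (1 / 2) :=
    geo_unique w z₁ x _ (by norm_num) (by rw [hwx, dist_comm w z₁, hw]; ring)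
      (by rw [dist_comm x, hd, dist_comm w z₁, hw]; ring)
  have hmid₂ : x = geo n w z₂ (1 / 2) :=
    geo_unique w z₂ x _ (by norm_num) (by rw [hwx, dist_comm w z₂, dist_reflect]; ring)
      (by rw [dist_comm x, dist_comm w z₂, dist_reflect]; ring)
  exact geo_injective_of_ne_zero w (by norm_num) (hmid₁.symm.trans hmid₂)

/-- The point of `[a, q]` at distance `d(a, x)` from `a` is close to `x` when the triangle
inequality `d(a, q) ≤ d(a, x) + d(x, q)` is nearly an equality. -/
theorem dist_geo_sq_le {a q x : M} (h : dist a x ≤ dist a q) :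
    dist (geo n a q (dist a x / dist a q)) x ^ 2 ≤
      dist a x / dist a q * (dist a x + dist x q - dist a q) *
        (dist x q + dist a q - dist a x) := by
  rcases (dist_nonneg (x := a) (y := q)).eq_or_lt with h0 | hpos
  · have hx : dist a x = 0 := le_antisymm (h0 ▸ h) dist_nonneg
    rw [hx, ← h0, div_zero, geo_zero, dist_eq_zero.1 hx]
    simp
  have hcn := cn_ineq (n := n) a q x _ ⟨div_nonneg dist_nonneg hpos.le, (div_le_one hpos).2 h⟩
  rw [dist_comm q x] at hcn
  convert hcn using 1
  field_simp
  ring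

theorem dist_ray_left {z x : M} (hzx : z ≠ x) {t : ℝ} (ht : 0 ≤ t) :
    dist z (ray n z x t) = t := by
  have h := ray_isom (n := n) z x hzx 0 self_mem_Ici t ht
  rwa [ray_zero (n := n) z x hzx, zero_sub, abs_neg, abs_of_nonneg ht] at h

theorem dist_ray_of_le {z x : M} (hzx : z ≠ x) {t : ℝ} (ht : dist z x ≤ t) :
    dist x (ray n z x t) = t - dist z x := by
  have h := ray_isom (n := n) z x hzx (dist z x) dist_nonneg t (dist_nonneg.trans ht)
  rwa [ray_through (n := n) z x hzx, abs_of_nonpos (by linarith), neg_sub] at h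

theorem tendsto_dist_ray_atTop {z x : M} (hzx : z ≠ x) (y : M) :
    Tendsto (fun t => dist y (ray n z x t)) atTop atTop := by
  refine tendsto_atTop_mono' _ ?_ (tendsto_atTop_add_const_right _ (-dist z y) tendsto_id)
  filter_upwards [eventually_ge_atTop 0] with t ht
  have := dist_triangle z y (ray n z x t)
  rw [dist_ray_left hzx ht] at this
  simp only [id]
  linarith

end Hadamard

section Busemann

open Hadamard

variable {n : ℕ} {M : Type u} [Hadamard n M] {z x : M}

theorem antitoneOn_dist_ray_sub (hzx : z ≠ x) (y : M) :
    AntitoneOn (fun t => dist y (ray n z x t) - t) (Ici 0) := by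
  intro s hs t ht hst
  have h := dist_triangle y (ray n z x s) (ray n z x t)
  rw [ray_isom (n := n) z x hzx s hs t ht, abs_of_nonpos (by linarith), neg_sub] at h
  simp only
  linarith

theorem tendsto_busemann (hzx : z ≠ x) (y : M) :
    Tendsto (fun t => dist y (ray n z x t) - t) atTop (𝓝 (busemann n z x y)) := by
  set φ : ℝ → ℝ := fun t => dist y (ray n z x t) - t
  set f : Ici (0 : ℝ) → ℝ := fun t => φ t
  have hanti : Antitone f := fun s t hst => antitoneOn_dist_ray_sub hzx y s.2 t.2 hst
  have hbdd : BddBelow (range f) := by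
    refine ⟨-dist z y, ?_⟩
    rintro _ ⟨t, rfl⟩
    have := dist_triangle z y (ray n z x t)
    rw [dist_ray_left hzx t.2] at this
    simp only [f, φ]
    linarith
  have h := (tendsto_comp_val_Ici_atTop (f := φ)).1 (tendsto_atTop_ciInf hanti hbdd)
  rwa [busemann, h.limUnder_eq]

theorem busemann_le_dist_sub (hzx : z ≠ x) (y : M) :
    busemann n z x y ≤ dist y x - dist z x := by
  refine le_of_tendsto (tendsto_busemann hzx y) ?_
  filter_upwards [eventually_ge_atTop (dist z x)] with t ht
  have h := antitoneOn_dist_ray_sub (n := n) hzx y dist_nonneg (dist_nonneg.trans ht) ht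
  simp only at h
  rwa [ray_through (n := n) z x hzx] at h

theorem dist_mul_busemann_le (z x y : M) :
    dist z x * busemann n z x y ≤ dist z x * (dist y x - dist z x) := by
  rcases eq_or_ne z x with rfl | hzx
  · simp
  · exact mul_le_mul_of_nonneg_left (busemann_le_dist_sub hzx y) dist_nonneg

end Busemann

section Uniqueness

open Hadamard

variable {n : ℕ} {M : Type u} [Hadamard n M] {z₁ z₂ x : M}

theorem tendsto_sub_dist_ray_of_busemann_eq_zero (hzx : z₁ ≠ x) (hb : busemann n z₁ x z₂ = 0) :
    Tendsto (fun T => T - dist z₂ (ray n z₁ x T)) atTop (𝓝 0) := by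
  simpa [hb] using (tendsto_busemann (n := n) hzx z₂).neg

theorem tendsto_geo_ray_of_busemann_eq_zero (hzx : z₁ ≠ x) (hd : dist z₂ x = dist z₁ x)
    (hb : busemann n z₁ x z₂ = 0) :
    Tendsto (fun T => geo n z₂ (ray n z₁ x T) (dist z₂ x / dist z₂ (ray n z₁ x T))) atTop
      (𝓝 x) := by
  set d := dist z₂ x
  set g := fun T => dist z₂ (ray n z₁ x T)
  have he := tendsto_sub_dist_ray_of_busemann_eq_zero hzx hb
  have hg := tendsto_dist_ray_atTop (n := n) hzx z₂
  have hΦ :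
      Tendsto (fun T => d * (T - g T) * (2 + (T - g T - 2 * d) * (g T)⁻¹)) atTop (𝓝 0) := by
    simpa using (tendsto_const_nhds.mul he).mul
      (tendsto_const_nhds.add ((he.sub_const (2 * d)).mul hg.inv_tendsto_atTop))
  have hsq : ∀ᶠ T in atTop, dist (geo n z₂ (ray n z₁ x T) (d / g T)) x ^ 2 ≤
      d * (T - g T) * (2 + (T - g T - 2 * d) * (g T)⁻¹) := by
    filter_upwards [eventually_ge_atTop (dist z₁ x), hg.eventually_gt_atTop d] with T hT hgT
    have hgpos : 0 < g T := dist_nonneg.trans_lt hgT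
    have h := dist_geo_sq_le (n := n) hgT.le
    rw [dist_ray_of_le hzx hT, ← hd] at h
    change _ ≤ d / g T * (d + (T - d) - g T) * (T - d + g T - d) at h
    convert h using 1
    field_simp
    ring
  refine tendsto_iff_dist_tendsto_zero.2
    (squeeze_zero' (Eventually.of_forall fun _ => dist_nonneg) ?_ (by simpa using hΦ.sqrt))
  filter_upwards [hsq] with T hT
  exact Real.le_sqrt_of_sq_le hT

theorem dist_reflect_of_busemann_eq_zero (hzx : z₁ ≠ x) (hd : dist z₂ x = dist z₁ x)
    (hb : busemann n z₁ x z₂ = 0) : dist z₁ (reflect n z₂ x) = 2 * dist z₂ x := by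
  set d := dist z₂ x
  set w := reflect n z₂ x
  set g := fun T => dist z₂ (ray n z₁ x T)
  refine le_antisymm ?_ ?_
  · calc dist z₁ w ≤ dist z₁ x + dist x w := dist_triangle _ _ _
      _ = 2 * d := by rw [dist_reflect_right, ← hd]; ring
  have ha : Tendsto (fun T => geo n z₂ (ray n z₁ x T) (2 * (d / g T))) atTop (𝓝 w) :=
    tendsto_geo_mul (tendsto_geo_ray_of_busemann_eq_zero hzx hd hb) 2
  have hd₀ : 0 < d := hd ▸ dist_pos.2 hzx
  have hlim : Tendsto
      (fun T => 2 * d + (T - g T) - dist w (geo n z₂ (ray n z₁ x T) (2 * (d / g T))))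
      atTop (𝓝 (2 * d)) := by
    simpa using ((tendsto_const_nhds (x := 2 * d)).add
      (tendsto_sub_dist_ray_of_busemann_eq_zero hzx hb)).sub ((tendsto_const_nhds (x := w)).dist ha)
  refine le_of_tendsto hlim ?_
  filter_upwards [eventually_ge_atTop 0,
    (tendsto_dist_ray_atTop (n := n) hzx z₂).eventually_ge_atTop (2 * d)] with T hT hgT
  have hgpos : 0 < g T := by linarith
  have hs : 2 * (d / g T) ∈ Icc (0 : ℝ) 1 :=
    ⟨by positivity, by rw [mul_div_assoc', div_le_one hgpos]; exact hgT⟩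
  have htri := dist_triangle4 z₁ w (geo n z₂ (ray n z₁ x T) (2 * (d / g T))) (ray n z₁ x T)
  rw [dist_ray_left hzx hT, dist_geo_right _ _ hs] at htri
  have hrest : (1 - 2 * (d / g T)) * g T = g T - 2 * d := by field_simp
  linarith

theorem eq_of_busemann_eq_zero (hzx : z₁ ≠ x) (hd : dist z₂ x = dist z₁ x)
    (hb : busemann n z₁ x z₂ = 0) : z₁ = z₂ :=
  eq_of_dist_reflect_eq hd.symm (dist_reflect_of_busemann_eq_zero hzx hd hb)

end Uniqueness

theorem resolvent_subsingleton_general {n : ℕ} {M : Type u} [Hadamard n M]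
    {Ω : Set M} (F : M → M → ℝ)
    (hmono : ∀ x ∈ Ω, ∀ y ∈ Ω, F x y + F y x ≤ 0)
    {lam : ℝ} (hlam : 0 < lam) (x : M)
    {z₁ z₂ : M} (hz₁ : z₁ ∈ Ω) (hz₂ : z₂ ∈ Ω)
    (h₁ : ∀ y ∈ Ω, 0 ≤ lam * F z₁ y + dist z₁ x * busemann n z₁ x y)
    (h₂ : ∀ y ∈ Ω, 0 ≤ lam * F z₂ y + dist z₂ x * busemann n z₂ x y) :
    z₁ = z₂ := by
  have hF : lam * F z₁ z₂ + lam * F z₂ z₁ ≤ 0 := by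
    rw [← mul_add]
    exact mul_nonpos_of_nonneg_of_nonpos hlam.le (hmono z₁ hz₁ z₂ hz₂)
  have hsum : 0 ≤ dist z₁ x * busemann n z₁ x z₂ + dist z₂ x * busemann n z₂ x z₁ := by
    linarith [h₁ z₂ hz₂, h₂ z₁ hz₁]
  have hb₁ := dist_mul_busemann_le (n := n) z₁ x z₂
  have hb₂ := dist_mul_busemann_le (n := n) z₂ x z₁
  have hd : dist z₂ x = dist z₁ x := by nlinarith [sq_nonneg (dist z₁ x - dist z₂ x)]
  rcases eq_or_ne z₁ x with rfl | hzx
  · exact (dist_eq_zero.1 (hd.trans (dist_self z₁))).symm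
  rw [hd, sub_self, mul_zero] at hb₁ hb₂
  rw [hd] at hsum
  have hb : dist z₁ x * busemann n z₁ x z₂ = 0 := by linarith
  exact eq_of_busemann_eq_zero hzx hd ((mul_eq_zero.1 hb).resolve_left (dist_pos.2 hzx).ne')

/-- Let `M` be a Hadamard manifold, `Ω ⊆ M` nonempty closed convex,
`F : Ω × Ω → ℝ` a monotone bifunction with `F(x,x) = 0`, `λ > 0` and `x ∈ M`.  If
`z₁, z₂ ∈ Ω` both satisfy `λ F(z_i, y) + d(z_i, x) b_{γ_{z_i,x}}(y) ≥ 0` for all `y ∈ Ω`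
(the regularization term being `0` when `z_i = x`, as then `d(z_i,x) = 0`), then
`z₁ = z₂`: the resolvent `J_λ^F(x)` contains at most one point. -/
theorem resolvent_subsingleton {n : ℕ} {M : Type u} [Hadamard n M]
    {Ω : Set M} (hne : Ω.Nonempty) (hcl : IsClosed Ω) (hconv : GConvex n Ω)
    (F : M → M → ℝ) (hdiag : ∀ x ∈ Ω, F x x = 0)
    (hmono : ∀ x ∈ Ω, ∀ y ∈ Ω, F x y + F y x ≤ 0)
    {lam : ℝ} (hlam : 0 < lam) (x : M)
    {z₁ z₂ : M} (hz₁ : z₁ ∈ Ω) (hz₂ : z₂ ∈ Ω)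
    (h₁ : ∀ y ∈ Ω, 0 ≤ lam * F z₁ y + dist z₁ x * busemann n z₁ x y)
    (h₂ : ∀ y ∈ Ω, 0 ≤ lam * F z₂ y + dist z₂ x * busemann n z₂ x y) :
    z₁ = z₂ :=
  resolvent_subsingleton_general F hmono hlam x hz₁ hz₂ h₁ h₂
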